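/- arXiv:2307.13559 — 11 statements merged into one kernel-verified Lean document; each statement's English description precedes it below -/
import Mathlib

section
/- Let S be a commutative noetherian local ring with maximal ideal n, let ω ∈ n be a non-zerodivisor, and let f : P → Q be an injective S-linear map between finitely generated projective S-modules such that ω annihilates Q/f(P) (equivalently, ω·q ∈ f(P) for every q ∈ Q). Then there exists a unique S-linear map f_Σ : Q → P such that f ∘ f_Σ = ω·id_Q and f_Σ ∘ f = ω·id_P. Moreover, f_Σ is injective and ω annihilates P/f_Σ(Q) (equivalently, ω·p ∈ f_Σ(Q) for every p ∈ P). -/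
/-!
`f` is an isomorphism onto its range and `ω • Q ⊆ f(P)`, so `f_Σ := f⁻¹ ∘ (ω • ·)` exists, and it
is unique and satisfies `f_Σ ∘ f = ω` because `f` is injective. Injectivity of `f_Σ` comes from
`f ∘ f_Σ = ω` and the regularity of `ω` on the projective, hence flat, module `Q`.
-/

universe u

namespace LinearMap

section SMulInv

variable {S P Q : Type*} [CommSemiring S] [AddCommMonoid P] [Module S P]
  [AddCommMonoid Q] [Module S Q]

noncomputable def smulInv (f : P →ₗ[S] Q) (hinj : Function.Injective f) (ω : S)
    (hcok : ∀ q : Q, ω • q ∈ range f) : Q →ₗ[S] P :=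
  (LinearEquiv.ofInjective f hinj).symm.toLinearMap ∘ₗ (lsmul S Q ω).codRestrict (range f) hcok

variable {f : P →ₗ[S] Q} {hinj : Function.Injective f} {ω : S}
  {hcok : ∀ q : Q, ω • q ∈ range f}

theorem apply_smulInv (q : Q) : f (smulInv f hinj ω hcok q) = ω • q := by
  simp only [smulInv, comp_apply, LinearEquiv.coe_coe, LinearEquiv.ofInjective_symm_apply]
  rfl

theorem smulInv_apply (p : P) : smulInv f hinj ω hcok (f p) = ω • p :=
  hinj (by rw [apply_smulInv, map_smul])

theorem eq_smulInv {g : Q →ₗ[S] P} (hg : ∀ q, f (g q) = ω • q) : g = smulInv f hinj ω hcok :=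
  ext fun q => hinj (by rw [hg, apply_smulInv])

end SMulInv

theorem injective_of_apply_comp_eq_smul {S P Q : Type*} [Semiring S] [AddCommMonoid P]
    [Module S P] [AddCommMonoid Q] [Module S Q] {f : P →ₗ[S] Q} {g : Q →ₗ[S] P} {ω : S}
    (hω : IsSMulRegular Q ω) (hg : ∀ q, f (g q) = ω • q) : Function.Injective g :=
  fun a b hab => hω (by simp only [← hg, hab])

end LinearMap

theorem stmt_0_general {S : Type u} [CommRing S]
    (ω : S) (hreg : ω ∈ nonZeroDivisors S)
    {P Q : Type u} [AddCommGroup P] [Module S P] [AddCommGroup Q] [Module S Q]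
    [Module.Projective S Q]
    (f : P →ₗ[S] Q) (hinj : Function.Injective f)
    (hcok : ∀ q : Q, ω • q ∈ LinearMap.range f) :
    (∃! fSig : Q →ₗ[S] P, (∀ q : Q, f (fSig q) = ω • q) ∧ (∀ p : P, fSig (f p) = ω • p)) ∧
    (∀ fSig : Q →ₗ[S] P, (∀ q : Q, f (fSig q) = ω • q) → (∀ p : P, fSig (f p) = ω • p) →
      Function.Injective fSig ∧ ∀ p : P, ω • p ∈ LinearMap.range fSig) := by
  refine ⟨⟨f.smulInv hinj ω hcok, ⟨LinearMap.apply_smulInv, LinearMap.smulInv_apply⟩,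
    fun g hg => LinearMap.eq_smulInv hg.1⟩, fun fSig hfSig hfSigf => ⟨?_, fun p => ⟨f p, hfSigf p⟩⟩⟩
  exact LinearMap.injective_of_apply_comp_eq_smul
    (Module.Flat.isSMulRegular_of_nonZeroDivisors hreg) hfSig

/-- existence and uniqueness of `f_Σ` with `f ∘ f_Σ = ω·id` and
`f_Σ ∘ f = ω·id`; moreover `f_Σ` is injective and `ω` annihilates `P / f_Σ(Q)`. -/
theorem stmt_0 {S : Type u} [CommRing S] [IsNoetherianRing S] [IsLocalRing S]
    (ω : S) (hω : ω ∈ IsLocalRing.maximalIdeal S) (hreg : ω ∈ nonZeroDivisors S)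
    {P Q : Type u} [AddCommGroup P] [Module S P] [AddCommGroup Q] [Module S Q]
    [Module.Finite S P] [Module.Projective S P]
    [Module.Finite S Q] [Module.Projective S Q]
    (f : P →ₗ[S] Q) (hinj : Function.Injective f)
    (hcok : ∀ q : Q, ω • q ∈ LinearMap.range f) :
    (∃! fSig : Q →ₗ[S] P, (∀ q : Q, f (fSig q) = ω • q) ∧ (∀ p : P, fSig (f p) = ω • p)) ∧
    (∀ fSig : Q →ₗ[S] P, (∀ q : Q, f (fSig q) = ω • q) → (∀ p : P, fSig (f p) = ω • p) →
      Function.Injective fSig ∧ ∀ p : P, ω • p ∈ LinearMap.range fSig) :=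
  stmt_0_general ω hreg f hinj hcok
end

section
/- Let S be a commutative noetherian local ring with maximal ideal n and ω ∈ n a non-zerodivisor. Let f : P → Q and f' : P' → Q' be injective S-linear maps between finitely generated projective S-modules whose cokernels are annihilated by ω, with associated maps f_Σ and f'_Σ, and let (ψ₁,ψ₀) be a morphism from (P →f Q) to (P' →f' Q') (so ψ₀ ∘ f = f' ∘ ψ₁). Then (ψ₁,ψ₀) is null-homotopic if and only if (ψ₀,ψ₁), regarded as a morphism from (Q →f_Σ P) to (Q' →f'_Σ P'), is null-homotopic. That is, there exist S-linear maps s₁ : P → Q' and s₀ : Q → P' with ψ₀ ∘ f − f' ∘ s₀ ∘ f = ω·s₁ if and only if there exist S-linear maps t₁ : Q → P' and t₀ : P → Q' with ψ₁ ∘ f_Σ − f'_Σ ∘ t₀ ∘ f_Σ = ω·t₁. -/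
/-!
Precomposing a homotopy `ψ₀ ∘ f - f' ∘ s₀ ∘ f = ω • s₁` with `f_Σ` and cancelling `ω` (projective
modules are `ω`-torsion-free) gives `s₁ ∘ f_Σ = ψ₀ - f' ∘ s₀`; applying `f'_Σ` turns this into the
homotopy `(s₀, s₁)` for `(ψ₀, ψ₁) : f_Σ → f'_Σ`. Since the `Σ`-partner of `f_Σ` is `f` again, the
same argument gives the converse.
-/

universe u

section NullHomotopy

variable {S A B A' B' : Type*} [CommRing S]
  [AddCommGroup A] [Module S A] [AddCommGroup B] [Module S B]
  [AddCommGroup A'] [Module S A'] [AddCommGroup B'] [Module S B']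
  {ω : S} {f : A →ₗ[S] B} {fS : B →ₗ[S] A} {f' : A' →ₗ[S] B'} {fS' : B' →ₗ[S] A'}
  {ψ₁ : A →ₗ[S] A'} {ψ₀ : B →ₗ[S] B'}

/-- Null-homotopy of a morphism `(ψ₁, ψ₀) : f → f'`; the condition only involves `ψ₀`. -/
def IsNullHomotopic (ω : S) (f : A →ₗ[S] B) (f' : A' →ₗ[S] B') (ψ₀ : B →ₗ[S] B') : Prop :=
  ∃ (s₁ : A →ₗ[S] B') (s₀ : B →ₗ[S] A'), ∀ a, ψ₀ (f a) - f' (s₀ (f a)) = ω • s₁ a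

theorem comp_sigma_eq_sigma_comp (hA' : IsSMulRegular A' ω) (h1 : ∀ b, f (fS b) = ω • b)
    (h2' : ∀ a, fS' (f' a) = ω • a) (hcomm : ∀ a, ψ₀ (f a) = f' (ψ₁ a)) (b : B) :
    ψ₁ (fS b) = fS' (ψ₀ b) :=
  hA' <| calc
    ω • ψ₁ (fS b) = fS' (ψ₀ (f (fS b))) := by rw [hcomm, h2']
    _ = ω • fS' (ψ₀ b) := by rw [h1, map_smul, map_smul]

theorem IsNullHomotopic.sigma (hA' : IsSMulRegular A' ω) (hB' : IsSMulRegular B' ω)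
    (h1 : ∀ b, f (fS b) = ω • b) (h2' : ∀ a, fS' (f' a) = ω • a)
    (hcomm : ∀ a, ψ₀ (f a) = f' (ψ₁ a)) (h : IsNullHomotopic ω f f' ψ₀) :
    IsNullHomotopic ω fS fS' ψ₁ := by
  obtain ⟨s₁, s₀, hs⟩ := h
  refine ⟨s₀, s₁, fun b => ?_⟩
  have hs₁ : s₁ (fS b) = ψ₀ b - f' (s₀ b) := hB' <| show ω • _ = ω • _ by
    rw [← hs, h1, map_smul, map_smul, map_smul, smul_sub]
  rw [hs₁, map_sub, h2', comp_sigma_eq_sigma_comp hA' h1 h2' hcomm, sub_sub_cancel]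

end NullHomotopy

theorem stmt_3_general {S : Type u} [CommRing S]
    (ω : S) (hreg : ω ∈ nonZeroDivisors S)
    {P Q P' Q' : Type u} [AddCommGroup P] [Module S P] [AddCommGroup Q] [Module S Q]
    [AddCommGroup P'] [Module S P'] [AddCommGroup Q'] [Module S Q']
    [Module.Projective S P']
    [Module.Projective S Q']
    (f : P →ₗ[S] Q)
    (f' : P' →ₗ[S] Q')
    (fSig : Q →ₗ[S] P)
    (h1 : ∀ q : Q, f (fSig q) = ω • q) (h2 : ∀ p : P, fSig (f p) = ω • p)
    (fSig' : Q' →ₗ[S] P')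
    (h1' : ∀ q : Q', f' (fSig' q) = ω • q) (h2' : ∀ p : P', fSig' (f' p) = ω • p)
    (ψ₁ : P →ₗ[S] P') (ψ₀ : Q →ₗ[S] Q')
    (hcomm : ∀ p : P, ψ₀ (f p) = f' (ψ₁ p)) :
    (∃ (s₁ : P →ₗ[S] Q') (s₀ : Q →ₗ[S] P'),
        ∀ p : P, ψ₀ (f p) - f' (s₀ (f p)) = ω • s₁ p) ↔
    (∃ (t₁ : Q →ₗ[S] P') (t₀ : P →ₗ[S] Q'),
        ∀ q : Q, ψ₁ (fSig q) - fSig' (t₀ (fSig q)) = ω • t₁ q) := by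
  have hP' : IsSMulRegular P' ω := Module.Flat.isSMulRegular_of_nonZeroDivisors hreg
  have hQ' : IsSMulRegular Q' ω := Module.Flat.isSMulRegular_of_nonZeroDivisors hreg
  exact ⟨IsNullHomotopic.sigma hP' hQ' h1 h2' hcomm,
    IsNullHomotopic.sigma hQ' hP' h2 h1' (comp_sigma_eq_sigma_comp hP' h1 h2' hcomm)⟩

/-- `(ψ₁, ψ₀)` is null-homotopic iff `(ψ₀, ψ₁) : f_Σ → f'_Σ` is null-homotopic. -/
theorem stmt_3 {S : Type u} [CommRing S] [IsNoetherianRing S] [IsLocalRing S]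
    (ω : S) (hω : ω ∈ IsLocalRing.maximalIdeal S) (hreg : ω ∈ nonZeroDivisors S)
    {P Q P' Q' : Type u} [AddCommGroup P] [Module S P] [AddCommGroup Q] [Module S Q]
    [AddCommGroup P'] [Module S P'] [AddCommGroup Q'] [Module S Q']
    [Module.Finite S P] [Module.Projective S P]
    [Module.Finite S Q] [Module.Projective S Q]
    [Module.Finite S P'] [Module.Projective S P']
    [Module.Finite S Q'] [Module.Projective S Q']
    (f : P →ₗ[S] Q) (hinj : Function.Injective f)
    (hcok : ∀ q : Q, ω • q ∈ LinearMap.range f)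
    (f' : P' →ₗ[S] Q') (hinj' : Function.Injective f')
    (hcok' : ∀ q : Q', ω • q ∈ LinearMap.range f')
    (fSig : Q →ₗ[S] P)
    (h1 : ∀ q : Q, f (fSig q) = ω • q) (h2 : ∀ p : P, fSig (f p) = ω • p)
    (fSig' : Q' →ₗ[S] P')
    (h1' : ∀ q : Q', f' (fSig' q) = ω • q) (h2' : ∀ p : P', fSig' (f' p) = ω • p)
    (ψ₁ : P →ₗ[S] P') (ψ₀ : Q →ₗ[S] Q')
    (hcomm : ∀ p : P, ψ₀ (f p) = f' (ψ₁ p)) :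
    (∃ (s₁ : P →ₗ[S] Q') (s₀ : Q →ₗ[S] P'),
        ∀ p : P, ψ₀ (f p) - f' (s₀ (f p)) = ω • s₁ p) ↔
    (∃ (t₁ : Q →ₗ[S] P') (t₀ : P →ₗ[S] Q'),
        ∀ q : Q, ψ₁ (fSig q) - fSig' (t₀ (fSig q)) = ω • t₁ q) :=
  stmt_3_general ω hreg f f' fSig h1 h2 fSig' h1' h2' ψ₁ ψ₀ hcomm
end

section
/- Let S be a commutative noetherian local ring with maximal ideal n and ω ∈ n a non-zerodivisor. Let f : P → Q and f' : P' → Q' be injective S-linear maps between finitely generated projective S-modules whose cokernels are annihilated by ω, with associated maps f_Σ, f'_Σ, and let (ψ₁,ψ₀) be a morphism from (P →f Q) to (P' →f' Q'). Define c : P' × Q → Q' × P by c(p',q) = (f'(p') + ψ₀(q), −f_Σ(q)) and c' : Q' × P → P' × Q by c'(q',p) = (f'_Σ(q') + ψ₁(p), −f(p)). Then c ∘ c' = ω·id_{Q'×P} and c' ∘ c = ω·id_{P'×Q}; in particular c' is the map c_Σ associated to the mapping cone c. -/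
/-!
Both `c` and `c'` have the shape `(x, y) ↦ (a x + b y, -d y)`. Composing two maps of this shape
gives `ω • id` as soon as both diagonal composites are `ω • id` and the off-diagonal term
`a ∘ b' - b ∘ d'` vanishes. For `c ∘ c'` this term vanishes by the morphism condition
`ψ₀ ∘ f = f' ∘ ψ₁`; for `c' ∘ c` it vanishes because `f'_Σ ∘ ψ₀ = ψ₁ ∘ f_Σ`, which follows from the
morphism condition after composing with the injective map `f'`.
-/

universe u

section Cone

variable {R : Type*} [Ring R] {M₁ M₂ N₁ N₂ : Type*}
  [AddCommGroup M₁] [Module R M₁] [AddCommGroup M₂] [Module R M₂]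
  [AddCommGroup N₁] [Module R N₁] [AddCommGroup N₂] [Module R N₂]

def coneMap (a : M₁ →ₗ[R] N₁) (b : M₂ →ₗ[R] N₁) (d : M₂ →ₗ[R] N₂) : M₁ × M₂ →ₗ[R] N₁ × N₂ :=
  (a.coprod b).prod (-(d ∘ₗ LinearMap.snd R M₁ M₂))

@[simp]
theorem coneMap_apply (a : M₁ →ₗ[R] N₁) (b : M₂ →ₗ[R] N₁) (d : M₂ →ₗ[R] N₂) (x : M₁) (y : M₂) :
    coneMap a b d (x, y) = (a x + b y, -d y) :=
  rfl

theorem coneMap_comp_coneMap_eq_smul (ω : R)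
    {a : M₁ →ₗ[R] N₁} {b : M₂ →ₗ[R] N₁} {d : M₂ →ₗ[R] N₂}
    {a' : N₁ →ₗ[R] M₁} {b' : N₂ →ₗ[R] M₁} {d' : N₂ →ₗ[R] M₂}
    (had : ∀ x, a (a' x) = ω • x) (hcomm : ∀ y, a (b' y) = b (d' y)) (hdd : ∀ y, d (d' y) = ω • y)
    (z : N₁ × N₂) : coneMap a b d (coneMap a' b' d' z) = ω • z := by
  obtain ⟨x, y⟩ := z
  simp [had, hcomm, hdd]

end Cone

theorem sigma_comp_eq_comp_sigma {R : Type*} [Semiring R] (ω : R) {P Q P' Q' : Type*}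
    [AddCommMonoid P] [Module R P] [AddCommMonoid Q] [Module R Q]
    [AddCommMonoid P'] [Module R P'] [AddCommMonoid Q'] [Module R Q']
    {f : P →ₗ[R] Q} {f' : P' →ₗ[R] Q'} {fSig : Q →ₗ[R] P} {fSig' : Q' →ₗ[R] P'}
    {ψ₁ : P →ₗ[R] P'} {ψ₀ : Q →ₗ[R] Q'} (hinj' : Function.Injective f')
    (h1 : ∀ q, f (fSig q) = ω • q) (h1' : ∀ q, f' (fSig' q) = ω • q)
    (hcomm : ∀ p, ψ₀ (f p) = f' (ψ₁ p)) (q : Q) :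
    fSig' (ψ₀ q) = ψ₁ (fSig q) :=
  hinj' <| by rw [h1', ← map_smul, ← h1, hcomm]

theorem stmt_5_general {S : Type u} [CommRing S]
    (ω : S)
    {P Q P' Q' : Type u} [AddCommGroup P] [Module S P] [AddCommGroup Q] [Module S Q]
    [AddCommGroup P'] [Module S P'] [AddCommGroup Q'] [Module S Q']
    (f : P →ₗ[S] Q)
    (f' : P' →ₗ[S] Q') (hinj' : Function.Injective f')
    (fSig : Q →ₗ[S] P)
    (h1 : ∀ q : Q, f (fSig q) = ω • q) (h2 : ∀ p : P, fSig (f p) = ω • p)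
    (fSig' : Q' →ₗ[S] P')
    (h1' : ∀ q : Q', f' (fSig' q) = ω • q) (h2' : ∀ p : P', fSig' (f' p) = ω • p)
    (ψ₁ : P →ₗ[S] P') (ψ₀ : Q →ₗ[S] Q')
    (hcomm : ∀ p : P, ψ₀ (f p) = f' (ψ₁ p))
    (c : P' × Q →ₗ[S] Q' × P)
    (hc : ∀ (p' : P') (q : Q), c (p', q) = (f' p' + ψ₀ q, -fSig q))
    (c' : Q' × P →ₗ[S] P' × Q)
    (hc' : ∀ (q' : Q') (p : P), c' (q', p) = (fSig' q' + ψ₁ p, -f p)) :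
    (∀ x : Q' × P, c (c' x) = ω • x) ∧ (∀ y : P' × Q, c' (c y) = ω • y) := by
  have hc_eq : c = coneMap f' ψ₀ fSig := LinearMap.ext fun ⟨p', q⟩ => hc p' q
  have hc'_eq : c' = coneMap fSig' ψ₁ f := LinearMap.ext fun ⟨q', p⟩ => hc' q' p
  have hsigma := sigma_comp_eq_comp_sigma ω hinj' h1 h1' hcomm
  subst hc_eq hc'_eq
  exact ⟨coneMap_comp_coneMap_eq_smul ω h1' (fun p => (hcomm p).symm) h2,
    coneMap_comp_coneMap_eq_smul ω h2' hsigma h1⟩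

/-- the map `c'(q', p) = (f'_Σ(q') + ψ₁(p), -f(p))` satisfies
`c ∘ c' = ω·id` and `c' ∘ c = ω·id`, i.e. `c' = c_Σ`. -/
theorem stmt_5 {S : Type u} [CommRing S] [IsNoetherianRing S] [IsLocalRing S]
    (ω : S) (hω : ω ∈ IsLocalRing.maximalIdeal S) (hreg : ω ∈ nonZeroDivisors S)
    {P Q P' Q' : Type u} [AddCommGroup P] [Module S P] [AddCommGroup Q] [Module S Q]
    [AddCommGroup P'] [Module S P'] [AddCommGroup Q'] [Module S Q']
    [Module.Finite S P] [Module.Projective S P]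
    [Module.Finite S Q] [Module.Projective S Q]
    [Module.Finite S P'] [Module.Projective S P']
    [Module.Finite S Q'] [Module.Projective S Q']
    (f : P →ₗ[S] Q) (hinj : Function.Injective f)
    (hcok : ∀ q : Q, ω • q ∈ LinearMap.range f)
    (f' : P' →ₗ[S] Q') (hinj' : Function.Injective f')
    (hcok' : ∀ q : Q', ω • q ∈ LinearMap.range f')
    (fSig : Q →ₗ[S] P)
    (h1 : ∀ q : Q, f (fSig q) = ω • q) (h2 : ∀ p : P, fSig (f p) = ω • p)
    (fSig' : Q' →ₗ[S] P')
    (h1' : ∀ q : Q', f' (fSig' q) = ω • q) (h2' : ∀ p : P', fSig' (f' p) = ω • p)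
    (ψ₁ : P →ₗ[S] P') (ψ₀ : Q →ₗ[S] Q')
    (hcomm : ∀ p : P, ψ₀ (f p) = f' (ψ₁ p))
    (c : P' × Q →ₗ[S] Q' × P)
    (hc : ∀ (p' : P') (q : Q), c (p', q) = (f' p' + ψ₀ q, -fSig q))
    (c' : Q' × P →ₗ[S] P' × Q)
    (hc' : ∀ (q' : Q') (p : P), c' (q', p) = (fSig' q' + ψ₁ p, -f p)) :
    (∀ x : Q' × P, c (c' x) = ω • x) ∧ (∀ y : P' × Q, c' (c y) = ω • y) :=
  stmt_5_general ω f f' hinj' fSig h1 h2 fSig' h1' h2' ψ₁ ψ₀ hcomm c hc c' hc'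
end

section
/- Let S be a commutative noetherian local ring with maximal ideal n and ω ∈ n a non-zerodivisor. Let f : P → Q be an injective S-linear map between finitely generated projective S-modules whose cokernel is annihilated by ω, and let f_Σ : Q → P be the unique map with f ∘ f_Σ = ω·id_Q and f_Σ ∘ f = ω·id_P. Define l : Q × P → P × Q by l(q,p) = (−f_Σ(q) + p, f(p)). Then l is injective and the quotient S-module (P × Q)/l(Q × P) is isomorphic to Q/ωQ. -/
/-!
The map `(p, q) ↦ q - f p` followed by `Q → Q/ωQ` is surjective, and it kills
`l(q, p) = (-fSig q + p, f p)` because `f ∘ fSig = ω`; conversely, if `q - f p = ω • q₀` then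
`(p, q) = l(q₀, p + fSig q₀)`. So its kernel is the range of `l`. Injectivity of `l` comes down to
`ω` acting injectively on `Q`, which holds since `Q` is projective, hence flat.
-/

universe u

section CokernelOfL

variable {R P Q : Type*} [CommRing R] [AddCommGroup P] [Module R P] [AddCommGroup Q] [Module R Q]
  {ω : R} {f : P →ₗ[R] Q} {fSig : Q →ₗ[R] P} {l : Q × P →ₗ[R] P × Q}

theorem injective_of_isSMulRegular (hω : IsSMulRegular Q ω) (hinj : Function.Injective f)
    (h1 : ∀ q : Q, f (fSig q) = ω • q) (hl : ∀ (q : Q) (p : P), l (q, p) = (-fSig q + p, f p)) :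
    Function.Injective l := by
  rw [← LinearMap.ker_eq_bot, Submodule.eq_bot_iff]
  rintro ⟨q, p⟩ hqp
  rw [LinearMap.mem_ker, hl, Prod.mk_eq_zero] at hqp
  obtain ⟨hfst, hsnd⟩ := hqp
  obtain rfl : p = 0 := hinj (by rw [hsnd, map_zero])
  have hq : fSig q = 0 := by simpa using hfst
  have hωq : ω • q = ω • (0 : Q) := by rw [← h1, hq, map_zero, smul_zero]
  rw [hω hωq]
  rfl

theorem range_eq_ker_mkQ_comp (h1 : ∀ q : Q, f (fSig q) = ω • q)
    (hl : ∀ (q : Q) (p : P), l (q, p) = (-fSig q + p, f p)) :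
    LinearMap.range l = LinearMap.ker ((LinearMap.range (ω • LinearMap.id)).mkQ ∘ₗ
      (LinearMap.snd R P Q - f ∘ₗ LinearMap.fst R P Q)) := by
  ext ⟨p, q⟩
  simp only [LinearMap.mem_range, LinearMap.mem_ker, LinearMap.comp_apply, Submodule.mkQ_apply,
    Submodule.Quotient.mk_eq_zero, LinearMap.sub_apply, LinearMap.snd_apply, LinearMap.fst_apply,
    LinearMap.smul_apply, LinearMap.id_apply]
  constructor
  · rintro ⟨⟨q₀, p₀⟩, heq⟩
    rw [hl, Prod.mk.injEq] at heq
    obtain ⟨rfl, rfl⟩ := heq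
    exact ⟨q₀, by rw [map_add, map_neg, h1]; abel⟩
  · rintro ⟨q₀, hq₀⟩
    refine ⟨(q₀, p + fSig q₀), ?_⟩
    rw [hl, map_add, h1, hq₀]
    ext <;> simp

theorem nonempty_quotient_range_equiv (h1 : ∀ q : Q, f (fSig q) = ω • q)
    (hl : ∀ (q : Q) (p : P), l (q, p) = (-fSig q + p, f p)) :
    Nonempty (((P × Q) ⧸ LinearMap.range l) ≃ₗ[R]
      (Q ⧸ LinearMap.range (ω • (LinearMap.id : Q →ₗ[R] Q)))) := by
  set g := (LinearMap.range (ω • LinearMap.id)).mkQ ∘ₗ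
    (LinearMap.snd R P Q - f ∘ₗ LinearMap.fst R P Q)
  have hsurj : Function.Surjective g := by
    intro x
    obtain ⟨q, rfl⟩ := Submodule.mkQ_surjective _ x
    exact ⟨(0, q), by simp [g]⟩
  exact ⟨(Submodule.quotEquivOfEq _ _ (range_eq_ker_mkQ_comp h1 hl)).trans
    (g.quotKerEquivOfSurjective hsurj)⟩

end CokernelOfL

theorem stmt_7_general {S : Type u} [CommRing S]
    (ω : S) (hreg : ω ∈ nonZeroDivisors S)
    {P Q : Type u} [AddCommGroup P] [Module S P] [AddCommGroup Q] [Module S Q]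
    [Module.Projective S Q]
    (f : P →ₗ[S] Q) (hinj : Function.Injective f)
    (fSig : Q →ₗ[S] P)
    (h1 : ∀ q : Q, f (fSig q) = ω • q)
    (l : Q × P →ₗ[S] P × Q)
    (hl : ∀ (q : Q) (p : P), l (q, p) = (-fSig q + p, f p)) :
    Function.Injective l ∧
      Nonempty (((P × Q) ⧸ LinearMap.range l) ≃ₗ[S]
        (Q ⧸ LinearMap.range (ω • (LinearMap.id : Q →ₗ[S] Q)))) :=
  ⟨injective_of_isSMulRegular (Module.Flat.isSMulRegular_of_nonZeroDivisors hreg) hinj h1 hl,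
    nonempty_quotient_range_equiv h1 hl⟩

/-- the map `l(q, p) = (-f_Σ(q) + p, f(p))` is injective with cokernel
isomorphic to `Q/ωQ`. -/
theorem stmt_7 {S : Type u} [CommRing S] [IsNoetherianRing S] [IsLocalRing S]
    (ω : S) (hω : ω ∈ IsLocalRing.maximalIdeal S) (hreg : ω ∈ nonZeroDivisors S)
    {P Q : Type u} [AddCommGroup P] [Module S P] [AddCommGroup Q] [Module S Q]
    [Module.Finite S P] [Module.Projective S P]
    [Module.Finite S Q] [Module.Projective S Q]
    (f : P →ₗ[S] Q) (hinj : Function.Injective f)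
    (hcok : ∀ q : Q, ω • q ∈ LinearMap.range f)
    (fSig : Q →ₗ[S] P)
    (h1 : ∀ q : Q, f (fSig q) = ω • q) (h2 : ∀ p : P, fSig (f p) = ω • p)
    (l : Q × P →ₗ[S] P × Q)
    (hl : ∀ (q : Q) (p : P), l (q, p) = (-fSig q + p, f p)) :
    Function.Injective l ∧
      Nonempty (((P × Q) ⧸ LinearMap.range l) ≃ₗ[S]
        (Q ⧸ LinearMap.range (ω • (LinearMap.id : Q →ₗ[S] Q)))) :=
  stmt_7_general ω hreg f hinj fSig h1 l hl
end

section
/- Let S be a commutative noetherian local ring with maximal ideal n and ω ∈ n a non-zerodivisor. Let f : P → Q be an injective S-linear map between finitely generated projective S-modules whose cokernel is annihilated by ω, with f_Σ : Q → P the unique map satisfying f ∘ f_Σ = ω·id_Q and f_Σ ∘ f = ω·id_P. Let f̄ : P/ωP → Q/ωQ and f̄_Σ : Q/ωQ → P/ωP be the maps induced by f and f_Σ on the quotients. Then ker(f̄) = image(f̄_Σ) and ker(f̄_Σ) = image(f̄); that is, the 2-periodic complex ⋯ → P/ωP →f̄ Q/ωQ →f̄_Σ P/ωP →f̄ Q/ωQ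 → ⋯ of S/(ω)-modules is exact. -/
/-!
If `f x ≡ 0` modulo `ω`, say `f x = ω y`, then `ω • f_Σ y = f_Σ (f x) = ω • x`; since `ω` is
a nonzerodivisor and projective modules are flat, `ω` can be cancelled, so `x = f_Σ y`.
The converse inclusion is `f ∘ f_Σ = ω`, and the second equality is the same argument with
the roles of `f` and `f_Σ` exchanged.
-/

section ReductionModNonZeroDivisor

variable {R M N : Type*} [CommRing R] [AddCommGroup M] [Module R M] [AddCommGroup N] [Module R N]

theorem Submodule.Quotient.mk_eq_zero_iff_exists_smul_eq (ω : R) (x : M) :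
    (Submodule.Quotient.mk x : M ⧸ LinearMap.range (ω • LinearMap.id : M →ₗ[R] M)) = 0 ↔
      ∃ y : M, ω • y = x := by
  simp [Submodule.Quotient.mk_eq_zero]

theorem LinearMap.ker_reduction_eq_range_reduction {ω : R} (hM : IsSMulRegular M ω)
    (f : M →ₗ[R] N) (g : N →ₗ[R] M)
    (hfg : ∀ n, f (g n) = ω • n) (hgf : ∀ m, g (f m) = ω • m)
    (fbar : (M ⧸ LinearMap.range (ω • LinearMap.id : M →ₗ[R] M)) →ₗ[R]
      (N ⧸ LinearMap.range (ω • LinearMap.id : N →ₗ[R] N)))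
    (hfbar : ∀ m, fbar (Submodule.Quotient.mk m) = Submodule.Quotient.mk (f m))
    (gbar : (N ⧸ LinearMap.range (ω • LinearMap.id : N →ₗ[R] N)) →ₗ[R]
      (M ⧸ LinearMap.range (ω • LinearMap.id : M →ₗ[R] M)))
    (hgbar : ∀ n, gbar (Submodule.Quotient.mk n) = Submodule.Quotient.mk (g n)) :
    LinearMap.ker fbar = LinearMap.range gbar := by
  ext x
  constructor
  · obtain ⟨m, rfl⟩ := Submodule.Quotient.mk_surjective _ x
    rw [LinearMap.mem_ker, hfbar, Submodule.Quotient.mk_eq_zero_iff_exists_smul_eq]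
    rintro ⟨n, hn⟩
    have hgn : g n = m := hM <| show ω • g n = ω • m by rw [← map_smul, hn, hgf]
    exact ⟨Submodule.Quotient.mk n, by rw [hgbar, hgn]⟩
  · rintro ⟨y, rfl⟩
    obtain ⟨n, rfl⟩ := Submodule.Quotient.mk_surjective _ y
    rw [LinearMap.mem_ker, hgbar, hfbar, Submodule.Quotient.mk_eq_zero_iff_exists_smul_eq]
    exact ⟨n, (hfg n).symm⟩

end ReductionModNonZeroDivisor

universe u

theorem stmt_8_general {S : Type u} [CommRing S]
    (ω : S) (hreg : ω ∈ nonZeroDivisors S)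
    {P Q : Type u} [AddCommGroup P] [Module S P] [AddCommGroup Q] [Module S Q]
    [Module.Projective S P]
    [Module.Projective S Q]
    (f : P →ₗ[S] Q)
    (fSig : Q →ₗ[S] P)
    (h1 : ∀ q : Q, f (fSig q) = ω • q) (h2 : ∀ p : P, fSig (f p) = ω • p)
    (fbar : (P ⧸ LinearMap.range (ω • (LinearMap.id : P →ₗ[S] P))) →ₗ[S]
      (Q ⧸ LinearMap.range (ω • (LinearMap.id : Q →ₗ[S] Q))))
    (hfbar : ∀ p : P, fbar (Submodule.Quotient.mk p) = Submodule.Quotient.mk (f p))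
    (fbarSig : (Q ⧸ LinearMap.range (ω • (LinearMap.id : Q →ₗ[S] Q))) →ₗ[S]
      (P ⧸ LinearMap.range (ω • (LinearMap.id : P →ₗ[S] P))))
    (hfbarSig : ∀ q : Q,
      fbarSig (Submodule.Quotient.mk q) = Submodule.Quotient.mk (fSig q)) :
    LinearMap.ker fbar = LinearMap.range fbarSig ∧
      LinearMap.ker fbarSig = LinearMap.range fbar :=
  ⟨LinearMap.ker_reduction_eq_range_reduction (Module.Flat.isSMulRegular_of_nonZeroDivisors hreg)
      f fSig h1 h2 fbar hfbar fbarSig hfbarSig,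
    LinearMap.ker_reduction_eq_range_reduction (Module.Flat.isSMulRegular_of_nonZeroDivisors hreg)
      fSig f h2 h1 fbarSig hfbarSig fbar hfbar⟩

/-- the induced 2-periodic complex
`⋯ → P/ωP →f̄ Q/ωQ →f̄_Σ P/ωP → ⋯` is exact: `ker f̄ = im f̄_Σ` and `ker f̄_Σ = im f̄`. -/
theorem stmt_8 {S : Type u} [CommRing S] [IsNoetherianRing S] [IsLocalRing S]
    (ω : S) (hω : ω ∈ IsLocalRing.maximalIdeal S) (hreg : ω ∈ nonZeroDivisors S)
    {P Q : Type u} [AddCommGroup P] [Module S P] [AddCommGroup Q] [Module S Q]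
    [Module.Finite S P] [Module.Projective S P]
    [Module.Finite S Q] [Module.Projective S Q]
    (f : P →ₗ[S] Q) (hinj : Function.Injective f)
    (hcok : ∀ q : Q, ω • q ∈ LinearMap.range f)
    (fSig : Q →ₗ[S] P)
    (h1 : ∀ q : Q, f (fSig q) = ω • q) (h2 : ∀ p : P, fSig (f p) = ω • p)
    (fbar : (P ⧸ LinearMap.range (ω • (LinearMap.id : P →ₗ[S] P))) →ₗ[S]
      (Q ⧸ LinearMap.range (ω • (LinearMap.id : Q →ₗ[S] Q))))
    (hfbar : ∀ p : P, fbar (Submodule.Quotient.mk p) = Submodule.Quotient.mk (f p))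
    (fbarSig : (Q ⧸ LinearMap.range (ω • (LinearMap.id : Q →ₗ[S] Q))) →ₗ[S]
      (P ⧸ LinearMap.range (ω • (LinearMap.id : P →ₗ[S] P))))
    (hfbarSig : ∀ q : Q,
      fbarSig (Submodule.Quotient.mk q) = Submodule.Quotient.mk (fSig q)) :
    LinearMap.ker fbar = LinearMap.range fbarSig ∧
      LinearMap.ker fbarSig = LinearMap.range fbar :=
  stmt_8_general ω hreg f fSig h1 h2 fbar hfbar fbarSig hfbarSig
end

section
/- Let S be a commutative noetherian local ring with maximal ideal n and ω ∈ n a non-zerodivisor. Let f : P → Q be an injective S-linear map between finitely generated projective S-modules whose cokernel Q/f(P) is annihilated by ω, and let f̄ : P/ωP → Q/ωQ be the induced map on quotients. Then there are S-linear isomorphisms ker(f̄) ≅ Q/f(P) and (Q/ωQ)/image(f̄) ≅ Q/f(P); that is, the sequence 0 → Coker f → P/ωP →f̄ Q/ωQ → Coker f → 0 is exact, so Coker f has a 2-periodic projective resolution over S/(ω). -/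
/-!
Since `ω • Q ⊆ f(P)` and `f` is injective, multiplication by `ω` on `Q` factors as `f ∘ g` for a
linear map `g : Q → P`. An element `p̄` lies in `ker f̄` exactly when `f p ∈ ωQ`, i.e. when
`p = g q`, so `Q → P/ωP, q ↦ g q` maps onto `ker f̄`; as `ω` is a nonzerodivisor on the
projective module `Q`, its kernel is `f(P)`. The cokernel of `f̄` is `(Q/ωQ)/(f(P)/ωQ) ≅ Q/f(P)`.
-/

universe u

open Submodule LinearMap

section QuotientBySMul

variable {S P Q : Type*} [CommRing S] [AddCommGroup P] [Module S P] [AddCommGroup Q]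
  [Module S Q]

theorem range_eq_map_mkQ_of_forall_mk {N : Submodule S P} {M : Submodule S Q} {f : P →ₗ[S] Q}
    {fbar : (P ⧸ N) →ₗ[S] (Q ⧸ M)}
    (hfbar : ∀ p : P, fbar (Submodule.Quotient.mk p) = Submodule.Quotient.mk (f p)) :
    range fbar = (range f).map M.mkQ := by
  ext x
  constructor
  · rintro ⟨y, rfl⟩
    obtain ⟨p, rfl⟩ := Submodule.Quotient.mk_surjective _ y
    exact ⟨f p, mem_range_self f p, (hfbar p).symm⟩
  · rintro ⟨_, ⟨p, rfl⟩, rfl⟩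
    exact ⟨Submodule.Quotient.mk p, hfbar p⟩

theorem mem_range_smul_id_iff {M : Type*} [AddCommGroup M] [Module S M] (ω : S) (m : M) :
    m ∈ range (ω • (LinearMap.id : M →ₗ[S] M)) ↔ ∃ m', ω • m' = m := by
  simp [mem_range]

namespace LinearMap

variable {ω : S} {f : P →ₗ[S] Q} (hinj : Function.Injective f)
  (hcok : ∀ q : Q, ω • q ∈ range f)

noncomputable def divSMul : Q →ₗ[S] P :=
  (LinearEquiv.ofInjective f hinj).symm.toLinearMap ∘ₗ
    (ω • LinearMap.id).codRestrict (range f) hcok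

theorem apply_divSMul (q : Q) : f (divSMul hinj hcok q) = ω • q := by
  have := (LinearEquiv.ofInjective f hinj).apply_symm_apply ⟨ω • q, hcok q⟩
  exact congrArg Subtype.val this

theorem divSMul_apply (p : P) : divSMul hinj hcok (f p) = ω • p :=
  hinj (by rw [apply_divSMul, map_smul])

theorem ker_mkQ_comp_divSMul (hQ : IsSMulRegular Q ω) :
    ker ((range (ω • LinearMap.id : P →ₗ[S] P)).mkQ ∘ₗ divSMul hinj hcok) = range f := by
  ext q
  simp only [mem_ker, coe_comp, Function.comp_apply, mkQ_apply, Quotient.mk_eq_zero,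
    mem_range_smul_id_iff]
  constructor
  · rintro ⟨p, hp⟩
    refine ⟨p, hQ ?_⟩
    simp only [← map_smul, hp, apply_divSMul]
  · rintro ⟨p, rfl⟩
    exact ⟨p, (divSMul_apply hinj hcok p).symm⟩

theorem range_mkQ_comp_divSMul
    {fbar : (P ⧸ range (ω • LinearMap.id : P →ₗ[S] P)) →ₗ[S]
      (Q ⧸ range (ω • LinearMap.id : Q →ₗ[S] Q))}
    (hfbar : ∀ p : P, fbar (Submodule.Quotient.mk p) = Submodule.Quotient.mk (f p)) :
    range ((range (ω • LinearMap.id : P →ₗ[S] P)).mkQ ∘ₗ divSMul hinj hcok) = ker fbar := by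
  apply le_antisymm
  · rintro _ ⟨q, rfl⟩
    simp only [mem_ker, coe_comp, Function.comp_apply, mkQ_apply, hfbar, apply_divSMul,
      Quotient.mk_eq_zero, mem_range_smul_id_iff, exists_apply_eq_apply]
  · intro x hx
    obtain ⟨p, rfl⟩ := Submodule.Quotient.mk_surjective _ x
    rw [mem_ker, hfbar, Quotient.mk_eq_zero, mem_range_smul_id_iff] at hx
    obtain ⟨q, hq⟩ := hx
    exact ⟨q, congrArg _ (hinj (by rw [apply_divSMul, hq]))⟩

end LinearMap

end QuotientBySMul

theorem stmt_9_general {S : Type u} [CommRing S]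
    (ω : S) (hreg : ω ∈ nonZeroDivisors S)
    {P Q : Type u} [AddCommGroup P] [Module S P] [AddCommGroup Q] [Module S Q]
    [Module.Projective S Q]
    (f : P →ₗ[S] Q) (hinj : Function.Injective f)
    (hcok : ∀ q : Q, ω • q ∈ LinearMap.range f)
    (fbar : (P ⧸ LinearMap.range (ω • (LinearMap.id : P →ₗ[S] P))) →ₗ[S]
      (Q ⧸ LinearMap.range (ω • (LinearMap.id : Q →ₗ[S] Q))))
    (hfbar : ∀ p : P, fbar (Submodule.Quotient.mk p) = Submodule.Quotient.mk (f p)) :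
    Nonempty ((LinearMap.ker fbar) ≃ₗ[S] (Q ⧸ LinearMap.range f)) ∧
      Nonempty (((Q ⧸ LinearMap.range (ω • (LinearMap.id : Q →ₗ[S] Q))) ⧸
          LinearMap.range fbar) ≃ₗ[S] (Q ⧸ LinearMap.range f)) := by
  have hQ : IsSMulRegular Q ω := Module.Flat.isSMulRegular_of_nonZeroDivisors hreg
  have hle : range (ω • LinearMap.id : Q →ₗ[S] Q) ≤ range f := by
    rintro _ ⟨q, rfl⟩
    exact hcok q
  let g := (range (ω • LinearMap.id : P →ₗ[S] P)).mkQ ∘ₗ divSMul hinj hcok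
  refine ⟨⟨?_⟩, ⟨?_⟩⟩
  · exact (LinearEquiv.ofEq _ _ (range_mkQ_comp_divSMul hinj hcok hfbar)).symm ≪≫ₗ
      g.quotKerEquivRange.symm ≪≫ₗ quotEquivOfEq _ _ (ker_mkQ_comp_divSMul hinj hcok hQ)
  · exact quotEquivOfEq _ _ (range_eq_map_mkQ_of_forall_mk hfbar) ≪≫ₗ
      quotientQuotientEquivQuotient _ _ hle

/-- for `f̄ : P/ωP → Q/ωQ` induced by `f`, we have
`ker f̄ ≅ Coker f` and `(Q/ωQ)/im f̄ ≅ Coker f`; that is, the sequence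
`0 → Coker f → P/ωP → Q/ωQ → Coker f → 0` is exact. -/
theorem stmt_9 {S : Type u} [CommRing S] [IsNoetherianRing S] [IsLocalRing S]
    (ω : S) (hω : ω ∈ IsLocalRing.maximalIdeal S) (hreg : ω ∈ nonZeroDivisors S)
    {P Q : Type u} [AddCommGroup P] [Module S P] [AddCommGroup Q] [Module S Q]
    [Module.Finite S P] [Module.Projective S P]
    [Module.Finite S Q] [Module.Projective S Q]
    (f : P →ₗ[S] Q) (hinj : Function.Injective f)
    (hcok : ∀ q : Q, ω • q ∈ LinearMap.range f)
    (fbar : (P ⧸ LinearMap.range (ω • (LinearMap.id : P →ₗ[S] P))) →ₗ[S]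
      (Q ⧸ LinearMap.range (ω • (LinearMap.id : Q →ₗ[S] Q))))
    (hfbar : ∀ p : P, fbar (Submodule.Quotient.mk p) = Submodule.Quotient.mk (f p)) :
    Nonempty ((LinearMap.ker fbar) ≃ₗ[S] (Q ⧸ LinearMap.range f)) ∧
      Nonempty (((Q ⧸ LinearMap.range (ω • (LinearMap.id : Q →ₗ[S] Q))) ⧸
          LinearMap.range fbar) ≃ₗ[S] (Q ⧸ LinearMap.range f)) :=
  stmt_9_general ω hreg f hinj hcok fbar hfbar
end

section
/- Let S be a commutative noetherian local ring with maximal ideal n, ω ∈ n a non-zerodivisor, and R = S/(ω). Let f : P → Q be an injective S-linear map between finitely generated projective S-modules whose cokernel is annihilated by ω, with f_Σ : Q → P the unique map satisfying f ∘ f_Σ = ω·id_Q and f_Σ ∘ f = ω·id_P, and let f̄ : P/ωP → Q/ωQ and f̄_Σ : Q/ωQ → P/ωP be the induced maps of R-modules. Applying the R-dual functor (−)^∨ = Hom_R(−, R), the resulting 2-periodic complex is exact: ker(f̄^∨) = image(f̄_Σ^∨) and ker(f̄_Σ^∨) = image(f̄^∨), where f̄^∨ : (Q/ωQ)^∨ →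 (P/ωP)^∨ and f̄_Σ^∨ : (P/ωP)^∨ → (Q/ωQ)^∨ are the dual maps. (Hence the 2-periodic complex of projective R-modules associated to f is totally acyclic and Coker f is a Gorenstein projective R-module.) -/
/-!
If `f ∘ f_Σ = ω` and `f_Σ ∘ f = ω`, an `R`-functional `φ` on `Q/ωQ` killed by `f̄` lifts, by
projectivity of `Q`, to an `S`-functional `Φ` on `Q` with `Φ ∘ f` divisible by `ω`, say
`Φ ∘ f = ω Ψ`. Cancelling the non-zerodivisor `ω` in `ω Ψ (f_Σ q) = Φ (f (f_Σ q)) = ω Φ q`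
gives `Ψ ∘ f_Σ = Φ`, so `φ` is the image under `f̄_Σ^∨` of `Ψ mod ω`. The reverse inclusion
is `f̄_Σ ∘ f̄ = 0`, and the roles of `f` and `f_Σ` are symmetric.
-/

universe u

open LinearMap

section ReduceMod

variable {S : Type*} [CommRing S] {ω : S}

theorem LinearMap.exists_mul_eq_of_forall_dvd (hω : ω ∈ nonZeroDivisors S)
    {M : Type*} [AddCommGroup M] [Module S M] (g : M →ₗ[S] S) (hg : ∀ m, ω ∣ g m) :
    ∃ h : M →ₗ[S] S, ∀ m, ω * h m = g m := by
  choose c hc using hg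
  refine ⟨{ toFun := c, map_add' := fun x y => ?_, map_smul' := fun s x => ?_ },
    fun m => (hc m).symm⟩
  · rw [← mul_cancel_left_mem_nonZeroDivisors hω, mul_add, ← hc, ← hc, ← hc, map_add]
  · rw [← mul_cancel_left_mem_nonZeroDivisors hω]
    change ω * c (s • x) = ω * (s * c x)
    rw [← hc, map_smul, smul_eq_mul, hc, mul_left_comm]

variable {P Q : Type*} [AddCommGroup P] [Module S P] [AddCommGroup Q] [Module S Q]

theorem LinearMap.range_smul_id_le_ker_mkQ_comp (Ψ : P →ₗ[S] S) :
    range (ω • (LinearMap.id : P →ₗ[S] P)) ≤ ker ((Ideal.span {ω}).mkQ ∘ₗ Ψ) := by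
  rintro _ ⟨p, rfl⟩
  rw [mem_ker, comp_apply, smul_apply, id_apply, map_smul, smul_eq_mul, Submodule.mkQ_apply,
    Submodule.Quotient.mk_eq_zero, Ideal.mem_span_singleton]
  exact dvd_mul_right ω (Ψ p)

variable [Module (S ⧸ Ideal.span {ω}) (P ⧸ range (ω • (LinearMap.id : P →ₗ[S] P)))]
  [Module (S ⧸ Ideal.span {ω}) (Q ⧸ range (ω • (LinearMap.id : Q →ₗ[S] Q)))]

variable (ω) in
def LinearMap.reduceMod
    [IsScalarTower S (S ⧸ Ideal.span {ω}) (P ⧸ range (ω • (LinearMap.id : P →ₗ[S] P)))]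
    (Ψ : P →ₗ[S] S) :
    (P ⧸ range (ω • (LinearMap.id : P →ₗ[S] P))) →ₗ[S ⧸ Ideal.span {ω}] S ⧸ Ideal.span {ω} :=
  extendScalarsOfSurjective Ideal.Quotient.mk_surjective
    ((range (ω • LinearMap.id)).liftQ _ Ψ.range_smul_id_le_ker_mkQ_comp)

@[simp]
theorem LinearMap.reduceMod_mk
    [IsScalarTower S (S ⧸ Ideal.span {ω}) (P ⧸ range (ω • (LinearMap.id : P →ₗ[S] P)))]
    (Ψ : P →ₗ[S] S) (p : P) :
    Ψ.reduceMod ω (Submodule.Quotient.mk p) = Ideal.Quotient.mk _ (Ψ p) :=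
  rfl

variable {f : P →ₗ[S] Q} {fSig : Q →ₗ[S] P}
  {fbar : (P ⧸ range (ω • (LinearMap.id : P →ₗ[S] P))) →ₗ[S ⧸ Ideal.span {ω}]
    (Q ⧸ range (ω • (LinearMap.id : Q →ₗ[S] Q)))}
  {fbarSig : (Q ⧸ range (ω • (LinearMap.id : Q →ₗ[S] Q))) →ₗ[S ⧸ Ideal.span {ω}]
    (P ⧸ range (ω • (LinearMap.id : P →ₗ[S] P)))}

theorem ker_dualMap_le_range_dualMap_of_comp_eq_smul [Module.Projective S Q]
    [IsScalarTower S (S ⧸ Ideal.span {ω}) (P ⧸ range (ω • (LinearMap.id : P →ₗ[S] P)))]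
    [IsScalarTower S (S ⧸ Ideal.span {ω}) (Q ⧸ range (ω • (LinearMap.id : Q →ₗ[S] Q)))]
    (hω : ω ∈ nonZeroDivisors S) (h1 : ∀ q, f (fSig q) = ω • q)
    (hfbar : ∀ p, fbar (Submodule.Quotient.mk p) = Submodule.Quotient.mk (f p))
    (hfbarSig : ∀ q, fbarSig (Submodule.Quotient.mk q) = Submodule.Quotient.mk (fSig q)) :
    ker fbar.dualMap ≤ range fbarSig.dualMap := by
  intro φ hφ
  have hφf : ∀ p, φ (Submodule.Quotient.mk (f p)) = 0 := fun p => by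
    rw [← hfbar, ← dualMap_apply, hφ]
    rfl
  obtain ⟨Φ, hΦ⟩ := Module.projective_lifting_property (Ideal.span {ω}).mkQ
    (φ.restrictScalars S ∘ₗ (range (ω • LinearMap.id)).mkQ) (Submodule.mkQ_surjective _)
  have hΦφ : ∀ q, Ideal.Quotient.mk _ (Φ q) = φ (Submodule.Quotient.mk q) :=
    LinearMap.congr_fun hΦ
  obtain ⟨Ψ, hΨ⟩ := (Φ ∘ₗ f).exists_mul_eq_of_forall_dvd hω fun p => by
    rw [← Ideal.mem_span_singleton, ← Ideal.Quotient.eq_zero_iff_mem, comp_apply, hΦφ, hφf]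
  have hΨΦ : ∀ q, Ψ (fSig q) = Φ q := fun q => by
    rw [← mul_cancel_left_mem_nonZeroDivisors hω, hΨ, comp_apply, h1, map_smul, smul_eq_mul]
  refine ⟨Ψ.reduceMod ω, ?_⟩
  refine LinearMap.ext fun x => ?_
  obtain ⟨q, rfl⟩ := Submodule.Quotient.mk_surjective _ x
  change Ψ.reduceMod ω (fbarSig (Submodule.Quotient.mk q)) = φ (Submodule.Quotient.mk q)
  rw [hfbarSig, reduceMod_mk, hΨΦ, hΦφ]

theorem comp_eq_zero_of_comp_eq_smul (h2 : ∀ p, fSig (f p) = ω • p)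
    (hfbar : ∀ p, fbar (Submodule.Quotient.mk p) = Submodule.Quotient.mk (f p))
    (hfbarSig : ∀ q, fbarSig (Submodule.Quotient.mk q) = Submodule.Quotient.mk (fSig q)) :
    fbarSig ∘ₗ fbar = 0 := by
  refine LinearMap.ext fun x => ?_
  obtain ⟨p, rfl⟩ := Submodule.Quotient.mk_surjective _ x
  rw [comp_apply, hfbar, hfbarSig, h2, LinearMap.zero_apply, Submodule.Quotient.mk_eq_zero]
  exact ⟨p, rfl⟩

theorem exact_dualMap_of_comp_eq_smul [Module.Projective S Q]
    [IsScalarTower S (S ⧸ Ideal.span {ω}) (P ⧸ range (ω • (LinearMap.id : P →ₗ[S] P)))]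
    [IsScalarTower S (S ⧸ Ideal.span {ω}) (Q ⧸ range (ω • (LinearMap.id : Q →ₗ[S] Q)))]
    (hω : ω ∈ nonZeroDivisors S)
    (h1 : ∀ q, f (fSig q) = ω • q) (h2 : ∀ p, fSig (f p) = ω • p)
    (hfbar : ∀ p, fbar (Submodule.Quotient.mk p) = Submodule.Quotient.mk (f p))
    (hfbarSig : ∀ q, fbarSig (Submodule.Quotient.mk q) = Submodule.Quotient.mk (fSig q)) :
    Function.Exact fbarSig.dualMap fbar.dualMap := by
  refine LinearMap.exact_iff.mpr
    (le_antisymm (ker_dualMap_le_range_dualMap_of_comp_eq_smul hω h1 hfbar hfbarSig) ?_)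
  rw [range_le_ker_iff, dualMap_comp_dualMap, comp_eq_zero_of_comp_eq_smul h2 hfbar hfbarSig,
    dualMap_def, map_zero]

end ReduceMod

theorem stmt_11_general {S : Type u} [CommRing S]
    (ω : S) (hreg : ω ∈ nonZeroDivisors S)
    {P Q : Type u} [AddCommGroup P] [Module S P] [AddCommGroup Q] [Module S Q]
    [Module.Projective S P]
    [Module.Projective S Q]
    (f : P →ₗ[S] Q)
    (fSig : Q →ₗ[S] P)
    (h1 : ∀ q : Q, f (fSig q) = ω • q) (h2 : ∀ p : P, fSig (f p) = ω • p)
    [Module (S ⧸ Ideal.span {ω})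
      (P ⧸ LinearMap.range (ω • (LinearMap.id : P →ₗ[S] P)))]
    [IsScalarTower S (S ⧸ Ideal.span {ω})
      (P ⧸ LinearMap.range (ω • (LinearMap.id : P →ₗ[S] P)))]
    [Module (S ⧸ Ideal.span {ω})
      (Q ⧸ LinearMap.range (ω • (LinearMap.id : Q →ₗ[S] Q)))]
    [IsScalarTower S (S ⧸ Ideal.span {ω})
      (Q ⧸ LinearMap.range (ω • (LinearMap.id : Q →ₗ[S] Q)))]
    (fbar : (P ⧸ LinearMap.range (ω • (LinearMap.id : P →ₗ[S] P))) →ₗ[S ⧸ Ideal.span {ω}]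
      (Q ⧸ LinearMap.range (ω • (LinearMap.id : Q →ₗ[S] Q))))
    (hfbar : ∀ p : P, fbar (Submodule.Quotient.mk p) = Submodule.Quotient.mk (f p))
    (fbarSig : (Q ⧸ LinearMap.range (ω • (LinearMap.id : Q →ₗ[S] Q))) →ₗ[S ⧸ Ideal.span {ω}]
      (P ⧸ LinearMap.range (ω • (LinearMap.id : P →ₗ[S] P))))
    (hfbarSig : ∀ q : Q,
      fbarSig (Submodule.Quotient.mk q) = Submodule.Quotient.mk (fSig q)) :
    LinearMap.ker fbar.dualMap = LinearMap.range fbarSig.dualMap ∧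
      LinearMap.ker fbarSig.dualMap = LinearMap.range fbar.dualMap :=
  ⟨(exact_dualMap_of_comp_eq_smul hreg h1 h2 hfbar hfbarSig).linearMap_ker_eq,
    (exact_dualMap_of_comp_eq_smul hreg h2 h1 hfbarSig hfbar).linearMap_ker_eq⟩

/-- applying `Hom_R(-, R)` (with `R = S/(ω)`) to the `2`-periodic complex
`⋯ → P/ωP →f̄ Q/ωQ →f̄_Σ P/ωP → ⋯` yields an exact complex:
`ker (f̄^∨) = im (f̄_Σ^∨)` and `ker (f̄_Σ^∨) = im (f̄^∨)`.  (Hence the `2`-periodic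
complex of projective `R`-modules is totally acyclic and `Coker f` is Gorenstein
projective over `R`.) -/
theorem stmt_11 {S : Type u} [CommRing S] [IsNoetherianRing S] [IsLocalRing S]
    (ω : S) (hω : ω ∈ IsLocalRing.maximalIdeal S) (hreg : ω ∈ nonZeroDivisors S)
    {P Q : Type u} [AddCommGroup P] [Module S P] [AddCommGroup Q] [Module S Q]
    [Module.Finite S P] [Module.Projective S P]
    [Module.Finite S Q] [Module.Projective S Q]
    (f : P →ₗ[S] Q) (hinj : Function.Injective f)
    (hcok : ∀ q : Q, ω • q ∈ LinearMap.range f)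
    (fSig : Q →ₗ[S] P)
    (h1 : ∀ q : Q, f (fSig q) = ω • q) (h2 : ∀ p : P, fSig (f p) = ω • p)
    [Module (S ⧸ Ideal.span {ω})
      (P ⧸ LinearMap.range (ω • (LinearMap.id : P →ₗ[S] P)))]
    [IsScalarTower S (S ⧸ Ideal.span {ω})
      (P ⧸ LinearMap.range (ω • (LinearMap.id : P →ₗ[S] P)))]
    [Module (S ⧸ Ideal.span {ω})
      (Q ⧸ LinearMap.range (ω • (LinearMap.id : Q →ₗ[S] Q)))]
    [IsScalarTower S (S ⧸ Ideal.span {ω})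
      (Q ⧸ LinearMap.range (ω • (LinearMap.id : Q →ₗ[S] Q)))]
    (fbar : (P ⧸ LinearMap.range (ω • (LinearMap.id : P →ₗ[S] P))) →ₗ[S ⧸ Ideal.span {ω}]
      (Q ⧸ LinearMap.range (ω • (LinearMap.id : Q →ₗ[S] Q))))
    (hfbar : ∀ p : P, fbar (Submodule.Quotient.mk p) = Submodule.Quotient.mk (f p))
    (fbarSig : (Q ⧸ LinearMap.range (ω • (LinearMap.id : Q →ₗ[S] Q))) →ₗ[S ⧸ Ideal.span {ω}]
      (P ⧸ LinearMap.range (ω • (LinearMap.id : P →ₗ[S] P))))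
    (hfbarSig : ∀ q : Q,
      fbarSig (Submodule.Quotient.mk q) = Submodule.Quotient.mk (fSig q)) :
    LinearMap.ker fbar.dualMap = LinearMap.range fbarSig.dualMap ∧
      LinearMap.ker fbarSig.dualMap = LinearMap.range fbar.dualMap :=
  stmt_11_general ω hreg f fSig h1 h2 fbar hfbar fbarSig hfbarSig
end

section
/- Let S be a commutative noetherian local ring with maximal ideal n and ω ∈ n a non-zerodivisor. Let f : P → Q and f' : P' → Q' be injective S-linear maps between finitely generated projective S-modules whose cokernels are annihilated by ω, and let (ψ₁,ψ₀) be a morphism from (P →f Q) to (P' →f' Q'). Then (ψ₁,ψ₀) is null-homotopic if and only if it factors through an object of the form (P₁ × Q₁ →(ω·id ⊕ id) P₁ × Q₁) with P₁, Q₁ finitely generated projective S-modules; i.e., if and only if there exist finitely generated projective S-modules P₁, Q₁ and S-linear maps a : P → P₁ × Q₁, b : Q → P₁ × Q₁, a' : P₁ × Q₁ → P', b' : P₁ × Q₁ → Q' such that (ω·id_{P₁} ⊕ id_{Q₁}) ∘ a = b ∘ f, f' ∘ a' = b' ∘ (ω·id_{P₁} ⊕ id_{Q₁}), ψ₁ =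 a' ∘ a and ψ₀ = b' ∘ b. -/
/-!
A null-homotopy `(s₁, s₀)` factors `(ψ₁, ψ₀)` through `(Q' × Q →(ω ⊕ id) Q' × Q)` via
`a = (s₁, f)`, `b = (ψ₀ - f' s₀, id)`, `a' = g ∘ fst + s₀ ∘ snd`, `b' = fst + f' s₀ ∘ snd`,
where `g : Q' → P'` satisfies `f' g = ω`; it exists because `f'` is injective and `ω` kills
its cokernel. Conversely, a factorization `(a', b') ∘ (a, b)` yields the null-homotopy
`s₁ = b'(a₁, 0)`, `s₀ = a'(0, b₂)`, because `b'(ω x, y) = ω b'(x, 0) + f' a'(0, y)`.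
-/

universe u

open LinearMap

section

variable {S : Type*} [CommRing S] {P Q P' Q' : Type*}
  [AddCommGroup P] [Module S P] [AddCommGroup Q] [Module S Q]
  [AddCommGroup P'] [Module S P'] [AddCommGroup Q'] [Module S Q'] (ω : S)

theorem LinearMap.exists_apply_eq_smul_of_smul_mem_range {f : P →ₗ[S] Q}
    (hf : Function.Injective f) (h : ∀ q : Q, ω • q ∈ range f) :
    ∃ g : Q →ₗ[S] P, ∀ q : Q, f (g q) = ω • q :=
  ⟨(LinearEquiv.ofInjective f hf).symm.toLinearMap ∘ₗ (ω • LinearMap.id).codRestrict _ h,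
    fun _ => LinearEquiv.ofInjective_symm_apply (h := hf) f _⟩

theorem exists_factorization_of_homotopy {f : P →ₗ[S] Q} {f' : P' →ₗ[S] Q'}
    (hinj' : Function.Injective f') (hcok' : ∀ q : Q', ω • q ∈ range f')
    {ψ₁ : P →ₗ[S] P'} {ψ₀ : Q →ₗ[S] Q'} (hcomm : ∀ p : P, ψ₀ (f p) = f' (ψ₁ p))
    {s₁ : P →ₗ[S] Q'} {s₀ : Q →ₗ[S] P'} (hs : ∀ p : P, ψ₀ (f p) - f' (s₀ (f p)) = ω • s₁ p) :
    ∃ (a : P →ₗ[S] Q' × Q) (b : Q →ₗ[S] Q' × Q)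
      (a' : Q' × Q →ₗ[S] P') (b' : Q' × Q →ₗ[S] Q'),
      (∀ p : P, (ω • (a p).1, (a p).2) = b (f p)) ∧
      (∀ x : Q' × Q, f' (a' x) = b' (ω • x.1, x.2)) ∧
      (∀ p : P, ψ₁ p = a' (a p)) ∧ (∀ q : Q, ψ₀ q = b' (b q)) := by
  obtain ⟨g, hg⟩ := exists_apply_eq_smul_of_smul_mem_range ω hinj' hcok'
  refine ⟨s₁.prod f, (ψ₀ - f' ∘ₗ s₀).prod LinearMap.id,
    g ∘ₗ fst S Q' Q + s₀ ∘ₗ snd S Q' Q, fst S Q' Q + f' ∘ₗ s₀ ∘ₗ snd S Q' Q,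
    fun p => ?_, fun x => ?_, fun p => hinj' ?_, fun q => ?_⟩
  · simp [hs p]
  · simp [hg]
  · simp only [LinearMap.add_apply, comp_apply, fst_apply, snd_apply, prod_apply,
      Function.prod, map_add, hg]
    rw [← hcomm p, ← hs p, sub_add_cancel]
  · simp

theorem exists_homotopy_of_factorization {P₁ Q₁ : Type*}
    [AddCommGroup P₁] [Module S P₁] [AddCommGroup Q₁] [Module S Q₁]
    {f : P →ₗ[S] Q} {f' : P' →ₗ[S] Q'} {ψ₀ : Q →ₗ[S] Q'}
    (a : P →ₗ[S] P₁ × Q₁) (b : Q →ₗ[S] P₁ × Q₁)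
    (a' : P₁ × Q₁ →ₗ[S] P') (b' : P₁ × Q₁ →ₗ[S] Q')
    (ha : ∀ p : P, (ω • (a p).1, (a p).2) = b (f p))
    (ha' : ∀ x : P₁ × Q₁, f' (a' x) = b' (ω • x.1, x.2))
    (hb : ∀ q : Q, ψ₀ q = b' (b q)) :
    ∃ (s₁ : P →ₗ[S] Q') (s₀ : Q →ₗ[S] P'),
      ∀ p : P, ψ₀ (f p) - f' (s₀ (f p)) = ω • s₁ p := by
  refine ⟨b' ∘ₗ inl S P₁ Q₁ ∘ₗ fst S P₁ Q₁ ∘ₗ a, a' ∘ₗ inr S P₁ Q₁ ∘ₗ snd S P₁ Q₁ ∘ₗ b,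
    fun p => ?_⟩
  have hsplit : b' (ω • (a p).1, (a p).2) = ω • b' ((a p).1, 0) + f' (a' (0, (a p).2)) := by
    rw [ha', smul_zero, ← map_smul, ← map_add, Prod.smul_mk, smul_zero, Prod.mk_add_mk,
      add_zero, zero_add]
  simp only [comp_apply, fst_apply, snd_apply, inl_apply, inr_apply, hb, ← ha, hsplit]
  abel

end

theorem stmt_12_general {S : Type u} [CommRing S]
    (ω : S)
    {P Q P' Q' : Type u} [AddCommGroup P] [Module S P] [AddCommGroup Q] [Module S Q]
    [AddCommGroup P'] [Module S P'] [AddCommGroup Q'] [Module S Q']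
    [Module.Finite S Q] [Module.Projective S Q]
    [Module.Finite S Q'] [Module.Projective S Q']
    (f : P →ₗ[S] Q)
    (f' : P' →ₗ[S] Q') (hinj' : Function.Injective f')
    (hcok' : ∀ q : Q', ω • q ∈ LinearMap.range f')
    (ψ₁ : P →ₗ[S] P') (ψ₀ : Q →ₗ[S] Q')
    (hcomm : ∀ p : P, ψ₀ (f p) = f' (ψ₁ p)) :
    (∃ (s₁ : P →ₗ[S] Q') (s₀ : Q →ₗ[S] P'),
        ∀ p : P, ψ₀ (f p) - f' (s₀ (f p)) = ω • s₁ p) ↔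
    (∃ (P₁ Q₁ : Type u) (_ : AddCommGroup P₁) (_ : Module S P₁)
        (_ : Module.Finite S P₁) (_ : Module.Projective S P₁)
        (_ : AddCommGroup Q₁) (_ : Module S Q₁)
        (_ : Module.Finite S Q₁) (_ : Module.Projective S Q₁)
        (a : P →ₗ[S] P₁ × Q₁) (b : Q →ₗ[S] P₁ × Q₁)
        (a' : P₁ × Q₁ →ₗ[S] P') (b' : P₁ × Q₁ →ₗ[S] Q'),
        (∀ p : P, (ω • (a p).1, (a p).2) = b (f p)) ∧
        (∀ x : P₁ × Q₁, f' (a' x) = b' (ω • x.1, x.2)) ∧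
        (∀ p : P, ψ₁ p = a' (a p)) ∧ (∀ q : Q, ψ₀ q = b' (b q))) := by
  constructor
  · rintro ⟨s₁, s₀, hs⟩
    exact ⟨Q', Q, inferInstance, inferInstance, inferInstance, inferInstance, inferInstance,
      inferInstance, inferInstance, inferInstance,
      exists_factorization_of_homotopy ω hinj' hcok' hcomm hs⟩
  · rintro ⟨P₁, Q₁, _, _, _, _, _, _, _, _, a, b, a', b', ha, ha', -, hb⟩
    exact exists_homotopy_of_factorization ω a b a' b' ha ha' hb

/-- a morphism `(ψ₁, ψ₀)` is null-homotopic iff it factors through an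
object of the form `(P₁ × Q₁ →(ω·id ⊕ id) P₁ × Q₁)` with `P₁, Q₁` finitely generated
projective. -/
theorem stmt_12 {S : Type u} [CommRing S] [IsNoetherianRing S] [IsLocalRing S]
    (ω : S) (hω : ω ∈ IsLocalRing.maximalIdeal S) (hreg : ω ∈ nonZeroDivisors S)
    {P Q P' Q' : Type u} [AddCommGroup P] [Module S P] [AddCommGroup Q] [Module S Q]
    [AddCommGroup P'] [Module S P'] [AddCommGroup Q'] [Module S Q']
    [Module.Finite S P] [Module.Projective S P]
    [Module.Finite S Q] [Module.Projective S Q]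
    [Module.Finite S P'] [Module.Projective S P']
    [Module.Finite S Q'] [Module.Projective S Q']
    (f : P →ₗ[S] Q) (hinj : Function.Injective f)
    (hcok : ∀ q : Q, ω • q ∈ LinearMap.range f)
    (f' : P' →ₗ[S] Q') (hinj' : Function.Injective f')
    (hcok' : ∀ q : Q', ω • q ∈ LinearMap.range f')
    (ψ₁ : P →ₗ[S] P') (ψ₀ : Q →ₗ[S] Q')
    (hcomm : ∀ p : P, ψ₀ (f p) = f' (ψ₁ p)) :
    (∃ (s₁ : P →ₗ[S] Q') (s₀ : Q →ₗ[S] P'),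
        ∀ p : P, ψ₀ (f p) - f' (s₀ (f p)) = ω • s₁ p) ↔
    (∃ (P₁ Q₁ : Type u) (_ : AddCommGroup P₁) (_ : Module S P₁)
        (_ : Module.Finite S P₁) (_ : Module.Projective S P₁)
        (_ : AddCommGroup Q₁) (_ : Module S Q₁)
        (_ : Module.Finite S Q₁) (_ : Module.Projective S Q₁)
        (a : P →ₗ[S] P₁ × Q₁) (b : Q →ₗ[S] P₁ × Q₁)
        (a' : P₁ × Q₁ →ₗ[S] P') (b' : P₁ × Q₁ →ₗ[S] Q'),
        (∀ p : P, (ω • (a p).1, (a p).2) = b (f p)) ∧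
        (∀ x : P₁ × Q₁, f' (a' x) = b' (ω • x.1, x.2)) ∧
        (∀ p : P, ψ₁ p = a' (a p)) ∧ (∀ q : Q, ψ₀ q = b' (b q))) :=
  stmt_12_general ω f f' hinj' hcok' ψ₁ ψ₀ hcomm
end

section
/- Let S be a commutative noetherian local ring with maximal ideal n and ω ∈ n a non-zerodivisor. Let f : P → Q and f' : P' → Q' be injective S-linear maps between finitely generated projective S-modules whose cokernels are annihilated by ω, with quotient maps π : Q → Q/f(P) and π' : Q' → Q'/f'(P'). Then for every S-linear map h : Q/f(P) → Q'/f'(P') there exist S-linear maps ψ₁ : P → P' and ψ₀ : Q → Q' such that ψ₀ ∘ f = f' ∘ ψ₁ and π' ∘ ψ₀ = h ∘ π. (This is the fullness of the cokernel functor from Mon(ω,P) to R-modules.) -/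
universe u

/-! The lift `ψ₀` of `h` through the projective `Q` must send `f(P)` into `f'(P')`, because
`h ∘ π` kills `f(P)`; injectivity of `f'` then lets `ψ₀ ∘ f` be divided by `f'`, giving `ψ₁`. -/

lemma Submodule.le_comap_of_mkQ_comp_eq {R M M' : Type*} [Ring R] [AddCommGroup M]
    [Module R M] [AddCommGroup M'] [Module R M'] {N : Submodule R M} {N' : Submodule R M'}
    {g : M →ₗ[R] M'} {h : (M ⧸ N) →ₗ[R] (M' ⧸ N')} (hg : N'.mkQ ∘ₗ g = h ∘ₗ N.mkQ) :
    N ≤ N'.comap g := by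
  have hker : LinearMap.ker (N'.mkQ ∘ₗ g) = N'.comap g := by
    rw [LinearMap.ker_comp, Submodule.ker_mkQ]
  intro x hx
  rw [← hker, hg, LinearMap.mem_ker, LinearMap.comp_apply, Submodule.mkQ_apply,
    (Submodule.Quotient.mk_eq_zero N).mpr hx, map_zero]

lemma LinearMap.exists_comp_eq_of_range_le {R M M' N : Type*} [Ring R] [AddCommGroup M]
    [Module R M] [AddCommGroup M'] [Module R M'] [AddCommGroup N] [Module R N]
    {f : M' →ₗ[R] N} (hf : Function.Injective f) {g : M →ₗ[R] N} (hg : range g ≤ range f) :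
    ∃ φ : M →ₗ[R] M', f ∘ₗ φ = g := by
  refine ⟨(LinearEquiv.ofInjective f hf).symm.toLinearMap ∘ₗ
    g.codRestrict (range f) fun x => hg (mem_range_self g x), ?_⟩
  ext x
  simp only [comp_apply, LinearEquiv.coe_coe]
  exact congrArg Subtype.val ((LinearEquiv.ofInjective f hf).apply_symm_apply _)

theorem stmt_13_general {S : Type u} [CommRing S]
    {P Q P' Q' : Type u} [AddCommGroup P] [Module S P] [AddCommGroup Q] [Module S Q]
    [AddCommGroup P'] [Module S P'] [AddCommGroup Q'] [Module S Q']
    [Module.Projective S Q]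
    (f : P →ₗ[S] Q)
    (f' : P' →ₗ[S] Q') (hinj' : Function.Injective f')
    (h : (Q ⧸ LinearMap.range f) →ₗ[S] (Q' ⧸ LinearMap.range f')) :
    ∃ (ψ₁ : P →ₗ[S] P') (ψ₀ : Q →ₗ[S] Q'),
      (∀ p : P, ψ₀ (f p) = f' (ψ₁ p)) ∧
      (∀ q : Q, (Submodule.Quotient.mk (ψ₀ q) : Q' ⧸ LinearMap.range f') =
        h (Submodule.Quotient.mk q)) := by
  obtain ⟨ψ₀, hψ₀⟩ := Module.projective_lifting_property (LinearMap.range f').mkQ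
    (h ∘ₗ (LinearMap.range f).mkQ) (Submodule.mkQ_surjective _)
  have hrange : LinearMap.range (ψ₀ ∘ₗ f) ≤ LinearMap.range f' := by
    rw [LinearMap.range_comp, Submodule.map_le_iff_le_comap]
    exact Submodule.le_comap_of_mkQ_comp_eq hψ₀
  obtain ⟨ψ₁, hψ₁⟩ := LinearMap.exists_comp_eq_of_range_le hinj' hrange
  exact ⟨ψ₁, ψ₀, fun p => (LinearMap.congr_fun hψ₁ p).symm, LinearMap.congr_fun hψ₀⟩

/-- fullness of the cokernel functor: any map `h : Coker f → Coker f'`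
lifts to a morphism `(ψ₁, ψ₀) : (P →f Q) → (P' →f' Q')`. -/
theorem stmt_13 {S : Type u} [CommRing S] [IsNoetherianRing S] [IsLocalRing S]
    (ω : S) (hω : ω ∈ IsLocalRing.maximalIdeal S) (hreg : ω ∈ nonZeroDivisors S)
    {P Q P' Q' : Type u} [AddCommGroup P] [Module S P] [AddCommGroup Q] [Module S Q]
    [AddCommGroup P'] [Module S P'] [AddCommGroup Q'] [Module S Q']
    [Module.Finite S P] [Module.Projective S P]
    [Module.Finite S Q] [Module.Projective S Q]
    [Module.Finite S P'] [Module.Projective S P']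
    [Module.Finite S Q'] [Module.Projective S Q']
    (f : P →ₗ[S] Q) (hinj : Function.Injective f)
    (hcok : ∀ q : Q, ω • q ∈ LinearMap.range f)
    (f' : P' →ₗ[S] Q') (hinj' : Function.Injective f')
    (hcok' : ∀ q : Q', ω • q ∈ LinearMap.range f')
    (h : (Q ⧸ LinearMap.range f) →ₗ[S] (Q' ⧸ LinearMap.range f')) :
    ∃ (ψ₁ : P →ₗ[S] P') (ψ₀ : Q →ₗ[S] Q'),
      (∀ p : P, ψ₀ (f p) = f' (ψ₁ p)) ∧
      (∀ q : Q, (Submodule.Quotient.mk (ψ₀ q) : Q' ⧸ LinearMap.range f') =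
        h (Submodule.Quotient.mk q)) :=
  stmt_13_general f f' hinj' h
end

section
/- Let S be a commutative noetherian local ring with maximal ideal n and ω ∈ n a non-zerodivisor. Let f : P → Q and f' : P' → Q' be injective S-linear maps between finitely generated projective S-modules whose cokernels are annihilated by ω, let (ψ₁,ψ₀) be a morphism from (P →f Q) to (P' →f' Q'), and let h : Q/f(P) → Q'/f'(P') be the induced map on cokernels (so π' ∘ ψ₀ = h ∘ π). If h factors through a module of the form P₁/ωP₁ with P₁ a finitely generated projective S-module — i.e., there exist S-linear maps α : Q/f(P) → P₁/ωP₁ and β : P₁/ωP₁ → Q'/f'(P') with h = β ∘ α — then (ψ₁,ψ₀) is null-homotopic: there exist S-linear maps s₁ : P → Q' and s₀ : Q → P' with ψ₀ ∘ f − f' ∘ s₀ ∘ f = ω·s₁. (This is the faithfulness of the cokernel functor from the homotopy category HMon(ω,P) to the stable category of Gorenstein projective R-modules.) -/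
/-!
Lift `α` and `β` to `a : Q → P₁` and `b : P₁ → Q'` by projectivity of `Q` and `P₁`. Then
`ψ₀ - b ∘ a` takes values in `f' P'`, so it is `f' ∘ s₀`, and `a ∘ f` takes values in `ω P₁`,
so it is `ω • u` because `ω` is regular on the flat module `P₁`. Hence
`ψ₀ ∘ f - f' ∘ s₀ ∘ f = b ∘ a ∘ f = ω • (b ∘ u)`.
-/

universe u

open LinearMap

theorem Submodule.exists_mkQ_comp_eq_comp_mkQ {S : Type*} [CommRing S]
    {Q Q' : Type*} [AddCommGroup Q] [Module S Q] [AddCommGroup Q'] [Module S Q']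
    [Module.Projective S Q] (M : Submodule S Q) (N : Submodule S Q')
    (φ : (Q ⧸ M) →ₗ[S] (Q' ⧸ N)) :
    ∃ c : Q →ₗ[S] Q', ∀ q : Q, N.mkQ (c q) = φ (M.mkQ q) := by
  obtain ⟨c, hc⟩ := Module.projective_lifting_property N.mkQ (φ ∘ₗ M.mkQ) N.mkQ_surjective
  exact ⟨c, fun q => LinearMap.congr_fun hc q⟩

theorem stmt_14_general {S : Type u} [CommRing S]
    (ω : S) (hreg : ω ∈ nonZeroDivisors S)
    {P Q P' Q' P₁ : Type u} [AddCommGroup P] [Module S P] [AddCommGroup Q] [Module S Q]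
    [AddCommGroup P'] [Module S P'] [AddCommGroup Q'] [Module S Q']
    [AddCommGroup P₁] [Module S P₁]
    [Module.Projective S Q]
    [Module.Projective S P₁]
    (f : P →ₗ[S] Q)
    (f' : P' →ₗ[S] Q') (hinj' : Function.Injective f')
    (ψ₀ : Q →ₗ[S] Q')
    (h : (Q ⧸ LinearMap.range f) →ₗ[S] (Q' ⧸ LinearMap.range f'))
    (hh : ∀ q : Q, h (Submodule.Quotient.mk q) = Submodule.Quotient.mk (ψ₀ q))
    (α : (Q ⧸ LinearMap.range f) →ₗ[S]
      (P₁ ⧸ LinearMap.range (ω • (LinearMap.id : P₁ →ₗ[S] P₁))))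
    (β : (P₁ ⧸ LinearMap.range (ω • (LinearMap.id : P₁ →ₗ[S] P₁))) →ₗ[S]
      (Q' ⧸ LinearMap.range f'))
    (hfac : ∀ x : Q ⧸ LinearMap.range f, h x = β (α x)) :
    ∃ (s₁ : P →ₗ[S] Q') (s₀ : Q →ₗ[S] P'),
      ∀ p : P, ψ₀ (f p) - f' (s₀ (f p)) = ω • s₁ p := by
  obtain ⟨a, ha⟩ := (range f).exists_mkQ_comp_eq_comp_mkQ _ α
  obtain ⟨b, hb⟩ := Submodule.exists_mkQ_comp_eq_comp_mkQ _ (range f') β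
  have hψ₀_sub : ∀ q, (ψ₀ - b ∘ₗ a) q ∈ range f' := fun q => by
    rw [LinearMap.sub_apply, LinearMap.comp_apply, ← Submodule.Quotient.eq, ← hh, hfac]
    exact ((hb (a q)).trans (congrArg β (ha q))).symm
  have haf_mem : ∀ p, (a ∘ₗ f) p ∈ range (ω • (LinearMap.id : P₁ →ₗ[S] P₁)) := fun p => by
    rw [LinearMap.comp_apply, ← Submodule.Quotient.mk_eq_zero]
    refine (ha (f p)).trans ?_
    rw [Submodule.mkQ_apply, (Submodule.Quotient.mk_eq_zero _).2 (mem_range_self f p), map_zero]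
  have hω : Function.Injective (ω • (LinearMap.id : P₁ →ₗ[S] P₁)) :=
    Module.Flat.isSMulRegular_of_nonZeroDivisors hreg
  let s₀ := codRestrictOfInjective _ f' hinj' hψ₀_sub
  let u := codRestrictOfInjective _ _ hω haf_mem
  refine ⟨b ∘ₗ u, s₀, fun p => ?_⟩
  calc ψ₀ (f p) - f' (s₀ (f p)) = b (a (f p)) := by simp [s₀]
    _ = b (ω • u p) := congrArg b (codRestrictOfInjective_comp_apply _ _ hω haf_mem p).symm
    _ = ω • b (u p) := map_smul b ω (u p)

/-- faithfulness of the cokernel functor: if the induced map `h` on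
cokernels factors through a module of the form `P₁/ωP₁` with `P₁` finitely generated
projective, then `(ψ₁, ψ₀)` is null-homotopic. -/
theorem stmt_14 {S : Type u} [CommRing S] [IsNoetherianRing S] [IsLocalRing S]
    (ω : S) (hω : ω ∈ IsLocalRing.maximalIdeal S) (hreg : ω ∈ nonZeroDivisors S)
    {P Q P' Q' P₁ : Type u} [AddCommGroup P] [Module S P] [AddCommGroup Q] [Module S Q]
    [AddCommGroup P'] [Module S P'] [AddCommGroup Q'] [Module S Q']
    [AddCommGroup P₁] [Module S P₁]
    [Module.Finite S P] [Module.Projective S P]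
    [Module.Finite S Q] [Module.Projective S Q]
    [Module.Finite S P'] [Module.Projective S P']
    [Module.Finite S Q'] [Module.Projective S Q']
    [Module.Finite S P₁] [Module.Projective S P₁]
    (f : P →ₗ[S] Q) (hinj : Function.Injective f)
    (hcok : ∀ q : Q, ω • q ∈ LinearMap.range f)
    (f' : P' →ₗ[S] Q') (hinj' : Function.Injective f')
    (hcok' : ∀ q : Q', ω • q ∈ LinearMap.range f')
    (ψ₁ : P →ₗ[S] P') (ψ₀ : Q →ₗ[S] Q')
    (hcomm : ∀ p : P, ψ₀ (f p) = f' (ψ₁ p))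
    (h : (Q ⧸ LinearMap.range f) →ₗ[S] (Q' ⧸ LinearMap.range f'))
    (hh : ∀ q : Q, h (Submodule.Quotient.mk q) = Submodule.Quotient.mk (ψ₀ q))
    (α : (Q ⧸ LinearMap.range f) →ₗ[S]
      (P₁ ⧸ LinearMap.range (ω • (LinearMap.id : P₁ →ₗ[S] P₁))))
    (β : (P₁ ⧸ LinearMap.range (ω • (LinearMap.id : P₁ →ₗ[S] P₁))) →ₗ[S]
      (Q' ⧸ LinearMap.range f'))
    (hfac : ∀ x : Q ⧸ LinearMap.range f, h x = β (α x)) :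
    ∃ (s₁ : P →ₗ[S] Q') (s₀ : Q →ₗ[S] P'),
      ∀ p : P, ψ₀ (f p) - f' (s₀ (f p)) = ω • s₁ p :=
  stmt_14_general ω hreg f f' hinj' ψ₀ h hh α β hfac
end

section
/- Let S be a commutative noetherian local ring with maximal ideal n and ω ∈ n a non-zerodivisor. Let f : P → Q and f' : P' → Q' be injective S-linear maps between finitely generated projective S-modules whose cokernels are annihilated by ω, let (ψ₁,ψ₀) be a morphism from (P →f Q) to (P' →f' Q'), and let h : Q/f(P) → Q'/f'(P') be the induced map on cokernels. If (ψ₁,ψ₀) is null-homotopic, then h factors through the projective R-module Q'/ωQ': there exist S-linear maps α : Q/f(P) → Q'/ωQ' and β : Q'/ωQ' → Q'/f'(P') with h = β ∘ α; in particular h is zero in the stable category of R-modules. -/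
/-! Replacing `ψ₀` by `ψ₀ - f' ∘ s₀` does not change `h`, and by the homotopy the new map carries
`f(P)` into `ωQ'`. Hence `h` is the composite `Q/f(P) → Q'/ωQ' → Q'/f'(P')`, the second map being
the projection that exists because `ωQ' ⊆ f'(P')`. -/

universe u

section

variable {S P Q P' Q' : Type*} [CommRing S] [AddCommGroup P] [Module S P]
  [AddCommGroup Q] [Module S Q] [AddCommGroup P'] [Module S P'] [AddCommGroup Q'] [Module S Q']

theorem Submodule.factor_comp_mapQ_eq {K : Submodule S Q} {N M' : Submodule S Q'}
    (hNM : N ≤ M') (g : Q →ₗ[S] Q') (hg : K ≤ N.comap g) (h : Q ⧸ K →ₗ[S] Q' ⧸ M')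
    (hh : ∀ q : Q, h (Submodule.Quotient.mk q) = Submodule.Quotient.mk (g q)) :
    factor hNM ∘ₗ K.mapQ N g hg = h :=
  Submodule.linearMap_qext _ <| LinearMap.ext fun q => (hh q).symm

theorem LinearMap.range_smul_id_le_range {ω : S} {f' : P' →ₗ[S] Q'}
    (hcok' : ∀ q : Q', ω • q ∈ LinearMap.range f') :
    LinearMap.range (ω • (LinearMap.id : Q' →ₗ[S] Q')) ≤ LinearMap.range f' := by
  rintro _ ⟨q, rfl⟩
  exact hcok' q

theorem LinearMap.range_le_comap_range_smul_id_sub_comp {ω : S} {f : P →ₗ[S] Q}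
    {f' : P' →ₗ[S] Q'} {ψ₀ : Q →ₗ[S] Q'} {s₁ : P →ₗ[S] Q'} {s₀ : Q →ₗ[S] P'}
    (hs : ∀ p : P, ψ₀ (f p) - f' (s₀ (f p)) = ω • s₁ p) :
    LinearMap.range f ≤
      (LinearMap.range (ω • (LinearMap.id : Q' →ₗ[S] Q'))).comap (ψ₀ - f' ∘ₗ s₀) := by
  rintro _ ⟨p, rfl⟩
  exact ⟨s₁ p, (hs p).symm⟩

end

theorem stmt_15_general {S : Type u} [CommRing S] (ω : S)
    {P Q P' Q' : Type u} [AddCommGroup P] [Module S P] [AddCommGroup Q] [Module S Q]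
    [AddCommGroup P'] [Module S P'] [AddCommGroup Q'] [Module S Q']
    (f : P →ₗ[S] Q) (f' : P' →ₗ[S] Q')
    (hcok' : ∀ q : Q', ω • q ∈ LinearMap.range f')
    (ψ₀ : Q →ₗ[S] Q')
    (h : (Q ⧸ LinearMap.range f) →ₗ[S] (Q' ⧸ LinearMap.range f'))
    (hh : ∀ q : Q, h (Submodule.Quotient.mk q) = Submodule.Quotient.mk (ψ₀ q))
    (hnull : ∃ (s₁ : P →ₗ[S] Q') (s₀ : Q →ₗ[S] P'),
      ∀ p : P, ψ₀ (f p) - f' (s₀ (f p)) = ω • s₁ p) :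
    ∃ (α : (Q ⧸ LinearMap.range f) →ₗ[S]
        (Q' ⧸ LinearMap.range (ω • (LinearMap.id : Q' →ₗ[S] Q'))))
      (β : (Q' ⧸ LinearMap.range (ω • (LinearMap.id : Q' →ₗ[S] Q'))) →ₗ[S]
        (Q' ⧸ LinearMap.range f')),
      ∀ x : Q ⧸ LinearMap.range f, h x = β (α x) := by
  obtain ⟨s₁, s₀, hs⟩ := hnull
  have hh' : ∀ q : Q, h (Submodule.Quotient.mk q) = Submodule.Quotient.mk ((ψ₀ - f' ∘ₗ s₀) q) :=
    fun q => by
      rw [hh, Submodule.Quotient.eq]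
      exact ⟨s₀ q, by simp⟩
  have hα := LinearMap.range_le_comap_range_smul_id_sub_comp hs
  have hβ := LinearMap.range_smul_id_le_range hcok'
  exact ⟨_, Submodule.factor hβ, fun x =>
    (LinearMap.congr_fun (Submodule.factor_comp_mapQ_eq hβ _ hα h hh') x).symm⟩

/-- if `(ψ₁, ψ₀)` is null-homotopic, then the induced map `h` on
cokernels factors through the projective `R`-module `Q'/ωQ'`. -/
theorem stmt_15 {S : Type u} [CommRing S] [IsNoetherianRing S] [IsLocalRing S]
    (ω : S) (hω : ω ∈ IsLocalRing.maximalIdeal S) (hreg : ω ∈ nonZeroDivisors S)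
    {P Q P' Q' : Type u} [AddCommGroup P] [Module S P] [AddCommGroup Q] [Module S Q]
    [AddCommGroup P'] [Module S P'] [AddCommGroup Q'] [Module S Q']
    [Module.Finite S P] [Module.Projective S P]
    [Module.Finite S Q] [Module.Projective S Q]
    [Module.Finite S P'] [Module.Projective S P']
    [Module.Finite S Q'] [Module.Projective S Q']
    (f : P →ₗ[S] Q) (hinj : Function.Injective f)
    (hcok : ∀ q : Q, ω • q ∈ LinearMap.range f)
    (f' : P' →ₗ[S] Q') (hinj' : Function.Injective f')
    (hcok' : ∀ q : Q', ω • q ∈ LinearMap.range f')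
    (ψ₁ : P →ₗ[S] P') (ψ₀ : Q →ₗ[S] Q')
    (hcomm : ∀ p : P, ψ₀ (f p) = f' (ψ₁ p))
    (h : (Q ⧸ LinearMap.range f) →ₗ[S] (Q' ⧸ LinearMap.range f'))
    (hh : ∀ q : Q, h (Submodule.Quotient.mk q) = Submodule.Quotient.mk (ψ₀ q))
    (hnull : ∃ (s₁ : P →ₗ[S] Q') (s₀ : Q →ₗ[S] P'),
      ∀ p : P, ψ₀ (f p) - f' (s₀ (f p)) = ω • s₁ p) :
    ∃ (α : (Q ⧸ LinearMap.range f) →ₗ[S]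
        (Q' ⧸ LinearMap.range (ω • (LinearMap.id : Q' →ₗ[S] Q'))))
      (β : (Q' ⧸ LinearMap.range (ω • (LinearMap.id : Q' →ₗ[S] Q'))) →ₗ[S]
        (Q' ⧸ LinearMap.range f')),
      ∀ x : Q ⧸ LinearMap.range f, h x = β (α x) :=
  stmt_15_general ω f f' hcok' ψ₀ h hh hnull
end
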